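/- arXiv:1612.04325 — 4 statements merged into one kernel-verified Lean document; each statement's English description precedes it below -/
import Mathlib

section
/- Let 𝔽_q have characteristic p, let r > 1 divide q^f + 1 for some f ≥ 1, let h ∈ 𝔽_q[x] be a polynomial with h(0) ≠ 0 that is not an e-th power in 𝔽_q(x) for any divisor e > 1 of r. Then for every N there exists a ∈ 𝔽_q(t) \ 𝔽_q such that the curve y^r = h(x)·h(a/x) has at least N rational points over 𝔽_q(t). -/
open Polynomial

lemma frob_aeval (Fq : Type*) [Field Fq] [Fintype Fq] (p : ℕ) [Fact p.Prime] [CharP Fq p]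
    (h : Polynomial Fq) (k : ℕ) (z : RatFunc Fq) :
    (aeval z h) ^ (Fintype.card Fq ^ k) = aeval (z ^ Fintype.card Fq ^ k) h := by
  obtain ⟨n, hp, hn⟩ := FiniteField.card Fq p
  haveI : CharP (RatFunc Fq) p :=
    charP_of_injective_algebraMap (algebraMap Fq (RatFunc Fq)).injective p
  have hcard : Fintype.card Fq ^ k = p ^ ((n : ℕ) * k) := by rw [hn, pow_mul]
  set φ : RatFunc Fq →+* RatFunc Fq := iterateFrobenius (RatFunc Fq) p ((n : ℕ) * k)
  have hφ : ∀ w : RatFunc Fq, φ w = w ^ Fintype.card Fq ^ k := by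
    intro w; rw [hcard]; rfl
  have hcomp : φ.comp (algebraMap Fq (RatFunc Fq)) = algebraMap Fq (RatFunc Fq) := by
    ext c
    rw [RingHom.comp_apply, hφ, ← map_pow, FiniteField.pow_card_pow]
  calc (aeval z h) ^ (Fintype.card Fq ^ k) = φ (aeval z h) := (hφ _).symm
    _ = eval₂ (φ.comp (algebraMap Fq (RatFunc Fq))) (φ z) h := by
        simp only [aeval_def]; exact hom_eval₂ _ _ _ _
    _ = aeval (z ^ Fintype.card Fq ^ k) h := by rw [hcomp, hφ, aeval_def]

lemma odd_dvd_aux (a j : ℕ) (ha : 1 ≤ a) : (a + 1) ∣ a ^ (2 * j + 1) + 1 := by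
  induction j with
  | zero => simpa using dvd_refl (a + 1)
  | succ j ih =>
    have h1 : 1 ≤ a ^ 2 := Nat.one_le_pow _ _ ha
    have e1 : a ^ 2 * (a ^ (2 * j + 1) + 1) = a ^ (2 * (j + 1) + 1) + a ^ 2 := by ring
    have key : a ^ (2 * (j + 1) + 1) + 1 + (a ^ 2 - 1) = a ^ 2 * (a ^ (2 * j + 1) + 1) := by
      omega
    have hd : (a + 1) ∣ a ^ 2 - 1 := by
      obtain ⟨b, rfl⟩ := Nat.exists_eq_add_of_le ha
      have hb : 1 + b - 1 = b := by omega
      have e : (1 + b + 1) * (1 + b - 1) + 1 = (1 + b) ^ 2 := by rw [hb]; ring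
      exact ⟨1 + b - 1, by omega⟩
    have h2 := Nat.dvd_sub (key ▸ Dvd.dvd.mul_left ih (a ^ 2)) hd
    simpa using h2


/-- Unboundedness of rational points: let `𝔽_q` be a finite field of characteristic `p`,
`r > 1` prime to `p` with `r ∣ q^f + 1` for some `f ≥ 1`, and `h ∈ 𝔽_q[x]` of positive
degree with `h(0) ≠ 0`, not an `e`-th power in `𝔽_q(x)` for any divisor `e > 1` of `r`.
Then for every `N` there is a nonconstant `a ∈ 𝔽_q(t)` such that the affine curve
`y^r = h(x) · h(a/x)` has at least `N` rational points over `𝔽_q(t)`. -/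
theorem stmt3 (Fq : Type*) [Field Fq] [Fintype Fq] (p : ℕ) [Fact p.Prime] [CharP Fq p]
    (q : ℕ) (hq : Fintype.card Fq = q)
    (r : ℕ) (hr : 1 < r) (hrp : Nat.Coprime r p)
    (f : ℕ) (hf : 1 ≤ f) (hrf : r ∣ q ^ f + 1)
    (h : Polynomial Fq) (hdeg : 0 < h.natDegree) (h0 : h.coeff 0 ≠ 0)
    (hpow : ∀ e : ℕ, e ∣ r → 1 < e →
      ¬ ∃ g : RatFunc Fq, g ^ e = algebraMap (Polynomial Fq) (RatFunc Fq) h)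
    (N : ℕ) :
    ∃ a : RatFunc Fq, a ∉ Set.range (algebraMap Fq (RatFunc Fq)) ∧
      ∃ S : Finset (RatFunc Fq × RatFunc Fq), N ≤ S.card ∧
        ∀ P ∈ S, P.1 ≠ 0 ∧ P.2 ^ r = aeval P.1 h * aeval (a / P.1) h := by
  classical
  have hq2 : 2 ≤ q := hq ▸ Fintype.one_lt_card
  set Q : ℕ := q ^ f with hQdef
  have hQ2 : 2 ≤ Q := le_trans hq2 (Nat.le_self_pow (by omega) q)
  have hrD : ∀ j : ℕ, r ∣ Q ^ (2 * j + 1) + 1 := fun j =>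
    hrf.trans (odd_dvd_aux Q j (by omega))
  set M : ℕ := N + 1 with hM
  set D : ℕ → ℕ := fun j => Q ^ (2 * j + 1) with hD
  set e : ℕ → ℕ := fun j => ∏ i ∈ (Finset.range M).erase j, (D i + 1) with he
  set E : ℕ := ∏ i ∈ Finset.range M, (D i + 1) with hE
  have hEe : ∀ j ∈ Finset.range M, e j * (D j + 1) = E := fun j hj =>
    Finset.prod_erase_mul _ _ hj
  have hepos : ∀ j, 0 < e j := fun j => Finset.prod_pos (fun i _ => Nat.succ_pos _)
  have hEpos : 0 < E := Finset.prod_pos (fun i _ => Nat.succ_pos _)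
  have hinj : Function.Injective (algebraMap (Polynomial Fq) (RatFunc Fq)) :=
    IsFractionRing.injective (Polynomial Fq) (RatFunc Fq)
  set x : ℕ → RatFunc Fq := fun j => algebraMap (Polynomial Fq) (RatFunc Fq) (X ^ e j) with hx
  set y : ℕ → RatFunc Fq := fun j => (aeval (x j) h) ^ ((D j + 1) / r) with hy
  have hxne : ∀ j, x j ≠ 0 := by
    intro j hc
    have : (X : Polynomial Fq) ^ e j = 0 := by
      apply hinj
      rw [map_zero]
      exact hc
    exact pow_ne_zero _ X_ne_zero this
  refine ⟨algebraMap (Polynomial Fq) (RatFunc Fq) (X ^ E), ?_, (Finset.range M).image (fun j => (x j, y j)), ?_, ?_⟩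
  · rintro ⟨c, hc⟩
    rw [IsScalarTower.algebraMap_apply Fq (Polynomial Fq) (RatFunc Fq)] at hc
    have hnd := congrArg natDegree (hinj hc)
    simp only [Polynomial.algebraMap_eq, natDegree_C, natDegree_X_pow] at hnd
    omega
  · have hcinj : Set.InjOn (fun j => (x j, y j)) (Finset.range M) := by
      intro i hi j hj hij
      have hxij : x i = x j := congrArg Prod.fst hij
      have hXij : (X : Polynomial Fq) ^ e i = X ^ e j := hinj hxij
      have hee : e i = e j := by
        have := congrArg natDegree hXij
        simpa [natDegree_X_pow] using this
      have hDij : D i + 1 = D j + 1 := by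
        have h1 := hEe i hi; have h2 := hEe j hj
        rw [hee] at h1
        exact Nat.eq_of_mul_eq_mul_left (hepos j) (by rw [h1, h2])
      have hDij2 : Q ^ (2 * i + 1) = Q ^ (2 * j + 1) := by
        simp only [hD] at hDij; omega
      have : 2 * i + 1 = 2 * j + 1 := Nat.pow_right_injective hQ2 hDij2
      omega
    rw [Finset.card_image_of_injOn hcinj, Finset.card_range]
    omega
  · intro P hP
    simp only [Finset.mem_image, Finset.mem_range] at hP
    obtain ⟨j, hj, rfl⟩ := hP
    refine ⟨hxne j, ?_⟩
    have hquot : algebraMap (Polynomial Fq) (RatFunc Fq) (X ^ E) / x j = (x j) ^ (D j) := by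
      rw [div_eq_iff (hxne j), ← pow_succ]
      rw [hx]
      rw [← map_pow, ← pow_mul]
      rw [hEe j (Finset.mem_range.mpr hj)]
    rw [hquot]
    have hdr : (D j + 1) / r * r = D j + 1 := Nat.div_mul_cancel (hrD j)
    have hfrob := frob_aeval Fq p h (f * (2 * j + 1)) (x j)
    rw [hq] at hfrob
    have hk : D j = q ^ (f * (2 * j + 1)) := by
      simp only [hD]
      rw [hQdef, ← pow_mul]
    calc y j ^ r = (aeval (x j) h) ^ (D j + 1) := by rw [hy, ← pow_mul, hdr]
      _ = aeval (x j) h * (aeval (x j) h) ^ (D j) := by ring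
      _ = aeval (x j) h * aeval ((x j) ^ (D j)) h := by rw [hk, hfrob]
end

section
/- Height bound: let p, r, s be pairwise coprime with r, s ≥ 1 and g = (r−1)s > 2, let d be prime to p, and let (x, y) ∈ 𝔽_q(t)² satisfy y^r = (x^s+1)(x^s+t^{ds})/x^s with x ≠ 0. Write x = u/v with u, v ∈ 𝔽_q[t] coprime, δ = max{deg u, deg v}. If x is not a p-th power in 𝔽_q(t), then δ ≤ (dg − 1)/(g − 2). -/
/-!
Write `x = u/v` and `y = a/b` in lowest terms; the curve equation becomes
`a^r u^s v^s = b^r (u^s + v^s) (u^s + t^{ds} v^s)`. Comparing multiplicities, every prime factor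
of `v`, every prime factor of `u` other than `t`, and every prime factor of `u^s + v^s` not dividing
`t^{ds} - 1` occurs to a multiplicity divisible by `r`, so `r·deg rad v ≤ deg v`,
`r·deg rad u ≤ deg u + r - 1` and `r·deg rad (u^s + v^s) ≤ sδ + (r - 1)ds`. Mason–Stothers for
`u^s + v^s - (u^s + v^s) = 0` gives `sδ + 1 ≤ deg rad u + deg rad v + deg rad (u^s + v^s)`, unless
`u^s` and `v^s` have zero derivative; then they are `p`-th powers and so is `x`, as `p ∤ s`.
Combining the four inequalities yields `gδ + 1 ≤ 2δ + dg`. The points with `y = 0` have `δ = 0`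
or `δ = d`.
-/

open Polynomial UniqueFactorizationMonoid UniqueFactorizationDomain

section UniqueFactorization

variable {R : Type*} [CommMonoidWithZero R] [NormalizationMonoid R] [UniqueFactorizationMonoid R]

theorem pow_dvd_of_le_count_normalizedFactors [DecidableEq R] {π w : R} {n : ℕ}
    (h : n ≤ (normalizedFactors w).count π) (hw : w ≠ 0) : π ^ n ∣ w := by
  have := Multiset.prod_dvd_prod_of_le (Multiset.le_count_iff_replicate_le.mp h)
  rw [Multiset.prod_replicate] at this
  exact this.trans (prod_normalizedFactors hw).dvd

theorem pow_dvd_of_pow_mul_eq_pow_mul [DecidableEq R] {r s : ℕ} (hrs : r.Coprime s)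
    {a b w c c' π : R} (h : a ^ r * (w ^ s * c) = b ^ r * c') (h0 : a ^ r * (w ^ s * c) ≠ 0)
    (hπ : π ∈ normalizedFactors w) (hc : ¬ π ∣ c) (hc' : ¬ π ∣ c') : π ^ r ∣ w := by
  have count_zero {z : R} (hz : ¬ π ∣ z) : (normalizedFactors z).count π = 0 :=
    Multiset.count_eq_zero.mpr fun hmem => hz (dvd_of_mem_normalizedFactors hmem)
  obtain ⟨ha, hw, hc0⟩ : a ^ r ≠ 0 ∧ w ^ s ≠ 0 ∧ c ≠ 0 := by
    simpa only [mul_ne_zero_iff] using h0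
  obtain ⟨hb, hc'0⟩ : b ^ r ≠ 0 ∧ c' ≠ 0 := by rwa [h, mul_ne_zero_iff] at h0
  -- `hcount : r * ord_π a + s * ord_π w = r * ord_π b`
  have hcount := congrArg (fun z => (normalizedFactors z).count π) h
  simp only [normalizedFactors_mul ha (mul_ne_zero hw hc0), normalizedFactors_mul hw hc0,
    normalizedFactors_mul hb hc'0, normalizedFactors_pow, Multiset.count_add,
    Multiset.count_nsmul, count_zero hc, count_zero hc', add_zero] at hcount
  have hdvd : r ∣ s * (normalizedFactors w).count π :=
    (Nat.dvd_add_right (dvd_mul_right r _)).mp (hcount ▸ dvd_mul_right r _)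
  refine pow_dvd_of_le_count_normalizedFactors ?_ (by rintro rfl; simp at hπ)
  exact Nat.le_of_dvd (Multiset.count_pos.mpr hπ) (hrs.dvd_of_dvd_mul_left hdvd)

theorem radical_pow_dvd_mul_pow {r : ℕ} {w F : R}
    (h : ∀ π ∈ normalizedFactors w, ¬ π ∣ F → π ^ r ∣ w) :
    radical w ^ r ∣ w * F ^ (r - 1) := by
  rw [radical, ← Finset.prod_pow]
  refine Finset.prod_dvd_of_isRelPrime (pairwise_primeFactors_isRelPrime.mono' fun _ _ h => h.pow)
    fun π hπ => ?_
  rw [mem_primeFactors] at hπ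
  by_cases hπF : π ∣ F
  · rcases r with _ | r
    · simp
    · rw [id, pow_succ', Nat.add_sub_cancel]
      exact mul_dvd_mul (dvd_of_mem_normalizedFactors hπ) (pow_dvd_pow_of_dvd hπF r)
  · exact (h π hπ hπF).mul_right _

end UniqueFactorization

theorem Prime.not_dvd_of_isCoprime {R : Type*} [CommSemiring R] {π x y : R} (hπ : Prime π)
    (hx : π ∣ x) (h : IsCoprime x y) : ¬ π ∣ y :=
  fun hy => hπ.not_isUnit (h.isUnit_of_dvd' hx hy)

theorem Polynomial.mul_natDegree_radical_le {k : Type*} [Field k] [DecidableEq k] {r : ℕ}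
    {w F : k[X]} (hw : w ≠ 0) (hF : F ≠ 0) (h : ∀ π ∈ normalizedFactors w, ¬ π ∣ F → π ^ r ∣ w) :
    r * (radical w).natDegree ≤ w.natDegree + (r - 1) * F.natDegree := by
  have := natDegree_le_of_dvd (radical_pow_dvd_mul_pow h) (mul_ne_zero hw (pow_ne_zero _ hF))
  rwa [natDegree_pow, natDegree_mul hw (pow_ne_zero _ hF), natDegree_pow] at this

theorem Polynomial.exists_pow_eq_of_derivative_eq_zero {k : Type*} [Field k] (p : ℕ)
    [Fact p.Prime] [CharP k p] [PerfectRing k p] {f : k[X]} (hf : derivative f = 0) :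
    ∃ g : k[X], g ^ p = f :=
  ⟨_, (polynomial_expand_eq k p _).symm.trans (expand_contract p hf (Fact.out : p.Prime).ne_zero)⟩

section Superelliptic

variable {k : Type*} [Field k] {r s d : ℕ} {a b u v : k[X]}

theorem num_pow_mul_eq_denom_pow_mul {x y : RatFunc k} (hu : u ≠ 0) (hv : v ≠ 0)
    (hxuv : x = algebraMap k[X] (RatFunc k) u / algebraMap k[X] (RatFunc k) v)
    (heq : y ^ r = (x ^ s + 1) * (x ^ s + RatFunc.X ^ (d * s)) / x ^ s) :
    y.num ^ r * (u ^ s * v ^ s) =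
      y.denom ^ r * ((u ^ s + v ^ s) * (u ^ s + X ^ (d * s) * v ^ s)) := by
  have hU : algebraMap k[X] (RatFunc k) u ≠ 0 := by simpa using hu
  have hV : algebraMap k[X] (RatFunc k) v ≠ 0 := by simpa using hv
  have hB : algebraMap k[X] (RatFunc k) y.denom ≠ 0 := by simpa using RatFunc.denom_ne_zero y
  rw [← y.num_div_denom, hxuv, ← RatFunc.algebraMap_X] at heq
  apply RatFunc.algebraMap_injective k
  simp only [map_mul, map_pow, map_add]
  simp only [div_pow] at heq
  field_simp at heq
  linear_combination heq

theorem isUnit_and_mul_natDegree_eq_of_pow_add_mul_pow_eq_zero (huv : IsCoprime u v)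
    (hs : s ≠ 0) {c : k[X]} (hc : c ≠ 0) (h : u ^ s + c * v ^ s = 0) :
    IsUnit v ∧ s * u.natDegree = c.natDegree := by
  have hus : u ^ s = -(c * v ^ s) := eq_neg_of_add_eq_zero_left h
  have hv : IsUnit v := huv.symm.pow_right.isUnit_of_dvd' dvd_rfl
    (by rw [hus, dvd_neg]; exact (dvd_pow_self v hs).mul_left c)
  refine ⟨hv, ?_⟩
  rw [← natDegree_pow, hus, natDegree_neg, natDegree_mul hc (pow_ne_zero _ hv.ne_zero),
    natDegree_pow, natDegree_eq_zero_of_isUnit hv, mul_zero, add_zero]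

theorem RatFunc.exists_pow_eq_of_derivative_pow_eq_zero (p : ℕ) [Fact p.Prime] [CharP k p]
    [PerfectRing k p] (hps : p.Coprime s) (hu : derivative (u ^ s) = 0)
    (hv : derivative (v ^ s) = 0) :
    ∃ z : RatFunc k, z ^ p = algebraMap k[X] (RatFunc k) u / algebraMap k[X] (RatFunc k) v := by
  obtain ⟨f, hf⟩ := exists_pow_eq_of_derivative_eq_zero p hu
  obtain ⟨g, hg⟩ := exists_pow_eq_of_derivative_eq_zero p hv
  have hpow : (algebraMap k[X] (RatFunc k) u / algebraMap k[X] (RatFunc k) v) ^ s =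
      (algebraMap k[X] (RatFunc k) f / algebraMap k[X] (RatFunc k) g) ^ p := by
    simp only [div_pow, ← map_pow, hf, hg]
  obtain ⟨z, hz, -⟩ := (pow_eq_pow_iff_of_coprime hps.symm).mp hpow
  exact ⟨z, hz.symm⟩

variable [DecidableEq k]

theorem mul_max_natDegree_add_one_le_or_derivative_eq_zero (hs : s ≠ 0) (huv : IsCoprime u v)
    (hu : u ≠ 0) (hv : v ≠ 0) (hC : u ^ s + v ^ s ≠ 0) :
    s * max u.natDegree v.natDegree + 1 ≤
        (radical u).natDegree + (radical v).natDegree + (radical (u ^ s + v ^ s)).natDegree ∨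
      derivative (u ^ s) = 0 ∧ derivative (v ^ s) = 0 := by
  rcases Polynomial.abc (pow_ne_zero s hu) (pow_ne_zero s hv) (neg_ne_zero.mpr hC) huv.pow
      (by ring) with ⟨hA, hB, -⟩ | ⟨hA, hB, -⟩
  · left
    have hrad : radical (u ^ s * v ^ s * -(u ^ s + v ^ s)) ∣
        radical u * radical v * radical (u ^ s + v ^ s) := by
      rw [mul_neg, radical_neg, ← radical_pow u hs, ← radical_pow v hs]
      exact radical_mul_dvd.trans (mul_dvd_mul_right radical_mul_dvd _)
    have hdeg := natDegree_le_of_dvd hrad (by simp)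
    rw [natDegree_mul (by simp) radical_ne_zero, natDegree_mul radical_ne_zero radical_ne_zero]
      at hdeg
    rw [natDegree_pow] at hA hB
    rw [← Nat.mul_max_mul_left]
    omega
  · exact .inr ⟨hA, hB⟩

theorem mul_natDegree_radical_right_le (hs : s ≠ 0) (hrs : r.Coprime s) (huv : IsCoprime u v)
    (ha : a ≠ 0) (hu : u ≠ 0) (hv : v ≠ 0)
    (E : a ^ r * (u ^ s * v ^ s) = b ^ r * ((u ^ s + v ^ s) * (u ^ s + X ^ (d * s) * v ^ s))) :
    r * (radical v).natDegree ≤ v.natDegree := by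
  have hcop : IsCoprime (v ^ s) (u ^ s * ((u ^ s + v ^ s) * (u ^ s + X ^ (d * s) * v ^ s))) :=
    have h := huv.symm.pow (m := s) (n := s)
    h.mul_right ((by simpa only [mul_one] using h.add_mul_left_right 1 :
      IsCoprime (v ^ s) (u ^ s + v ^ s)).mul_right (h.add_mul_right_right _))
  simpa using mul_natDegree_radical_le hv one_ne_zero fun π hπ _ => by
    have hp := prime_of_normalized_factor π hπ
    have hπv := dvd_pow (dvd_of_mem_normalizedFactors hπ) hs
    rw [mul_comm (u ^ s)] at E
    exact pow_dvd_of_pow_mul_eq_pow_mul hrs E (by simp [ha, hu, hv]) hπ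
      (fun h => hp.not_dvd_of_isCoprime hπv hcop (h.mul_right _))
      (fun h => hp.not_dvd_of_isCoprime hπv hcop (h.mul_left _))

theorem mul_natDegree_radical_left_le (hs : s ≠ 0) (hrs : r.Coprime s) (huv : IsCoprime u v)
    (ha : a ≠ 0) (hu : u ≠ 0) (hv : v ≠ 0)
    (E : a ^ r * (u ^ s * v ^ s) = b ^ r * ((u ^ s + v ^ s) * (u ^ s + X ^ (d * s) * v ^ s))) :
    r * (radical u).natDegree ≤ u.natDegree + (r - 1) := by
  have hcop : IsCoprime (u ^ s) (v ^ s * (u ^ s + v ^ s)) :=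
    have h := huv.pow (m := s) (n := s)
    h.mul_right (by simpa only [mul_one] using h.mul_add_left_right 1)
  simpa using mul_natDegree_radical_le hu X_ne_zero fun π hπ hπX => by
    have hp := prime_of_normalized_factor π hπ
    have hπu := dvd_pow (dvd_of_mem_normalizedFactors hπ) hs
    refine pow_dvd_of_pow_mul_eq_pow_mul hrs E (by simp [ha, hu, hv]) hπ
      (fun h => hp.not_dvd_of_isCoprime hπu hcop (h.mul_right _)) fun h => ?_
    rcases hp.dvd_mul.mp h with hC | hD
    · exact hp.not_dvd_of_isCoprime hπu hcop (hC.mul_left _)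
    rcases hp.dvd_mul.mp ((dvd_add_right hπu).mp hD) with hX | hv
    · exact hπX (hp.dvd_of_dvd_pow hX)
    · exact hp.not_dvd_of_isCoprime hπu hcop (hv.mul_right _)

theorem mul_natDegree_radical_pow_add_pow_le (hds : 0 < d * s) (huv : IsCoprime u v)
    (ha : a ≠ 0) (hu : u ≠ 0) (hv : v ≠ 0)
    (E : a ^ r * (u ^ s * v ^ s) = b ^ r * ((u ^ s + v ^ s) * (u ^ s + X ^ (d * s) * v ^ s))) :
    r * (radical (u ^ s + v ^ s)).natDegree ≤
      (u ^ s + v ^ s).natDegree + (r - 1) * (d * s) := by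
  have hcop : IsCoprime (u ^ s + v ^ s) (u ^ s * v ^ s) :=
    have h := huv.pow (m := s) (n := s)
    (by simpa only [mul_one, add_comm] using h.symm.add_mul_left_left 1 :
      IsCoprime (u ^ s + v ^ s) (u ^ s)).mul_right
        (by simpa only [mul_one] using h.add_mul_left_left 1)
  have hE : b ^ r * ((u ^ s + v ^ s) ^ 1 * (u ^ s + X ^ (d * s) * v ^ s)) =
      a ^ r * (u ^ s * v ^ s) := by rw [pow_one, E]
  have h0 : b ^ r * ((u ^ s + v ^ s) ^ 1 * (u ^ s + X ^ (d * s) * v ^ s)) ≠ 0 := by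
    rw [hE]; simp [ha, hu, hv]
  have hC : u ^ s + v ^ s ≠ 0 := by rintro hC; simp [hC] at h0
  have hF : (X ^ (d * s) - 1 : k[X]) ≠ 0 := by simpa using X_pow_sub_C_ne_zero hds (1 : k)
  have hFdeg : (X ^ (d * s) - 1 : k[X]).natDegree = d * s := by
    simpa using natDegree_X_pow_sub_C (n := d * s) (r := (1 : k))
  rw [← hFdeg]
  refine mul_natDegree_radical_le hC hF fun π hπ hπF => ?_
  have hp := prime_of_normalized_factor π hπ
  have hπC := dvd_of_mem_normalizedFactors hπ
  refine pow_dvd_of_pow_mul_eq_pow_mul (Nat.coprime_one_right r) hE h0 hπ (fun hD => ?_)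
    (hp.not_dvd_of_isCoprime hπC hcop)
  have hDC : u ^ s + X ^ (d * s) * v ^ s = (u ^ s + v ^ s) + (X ^ (d * s) - 1) * v ^ s := by ring
  rcases hp.dvd_mul.mp ((dvd_add_right hπC).mp (hDC ▸ hD)) with hF | hv
  · exact hπF hF
  · exact hp.not_dvd_of_isCoprime hπC hcop (hv.mul_left _)

theorem sub_one_mul_mul_max_natDegree_add_one_le (hr : 1 ≤ r) (hs : s ≠ 0) (hd : d ≠ 0)
    (hrs : r.Coprime s) (huv : IsCoprime u v) (ha : a ≠ 0) (hu : u ≠ 0) (hv : v ≠ 0)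
    (E : a ^ r * (u ^ s * v ^ s) = b ^ r * ((u ^ s + v ^ s) * (u ^ s + X ^ (d * s) * v ^ s)))
    (hM : s * max u.natDegree v.natDegree + 1 ≤
      (radical u).natDegree + (radical v).natDegree + (radical (u ^ s + v ^ s)).natDegree) :
    (r - 1) * s * max u.natDegree v.natDegree + 1 ≤
      2 * max u.natDegree v.natDegree + d * ((r - 1) * s) := by
  have hRu := mul_natDegree_radical_left_le hs hrs huv ha hu hv E
  have hRv := mul_natDegree_radical_right_le hs hrs huv ha hu hv E
  have hRC := mul_natDegree_radical_pow_add_pow_le (by positivity) huv ha hu hv E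
  have hCdeg : (u ^ s + v ^ s).natDegree ≤ s * max u.natDegree v.natDegree :=
    (natDegree_add_le _ _).trans (by simp only [natDegree_pow, Nat.mul_max_mul_left, le_refl])
  obtain ⟨r, rfl⟩ := Nat.exists_eq_add_of_le' hr
  simp only [Nat.add_sub_cancel] at hRu hRC ⊢
  nlinarith [le_max_left u.natDegree v.natDegree, le_max_right u.natDegree v.natDegree]

end Superelliptic

theorem cast_le_div_of_mul_add_one_le {g d δ : ℕ} (hg : 2 < g) (h : g * δ + 1 ≤ 2 * δ + d * g) :
    (δ : ℚ) ≤ (d * g - 1) / (g - 2) := by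
  have hg' : (2 : ℚ) < g := by exact_mod_cast hg
  have h' : (g * δ + 1 : ℚ) ≤ 2 * δ + d * g := by exact_mod_cast h
  rw [le_div_iff₀ (by linarith)]
  linarith

theorem stmt12_general (Fq : Type*) [Field Fq] [Fintype Fq]
    (p : ℕ) [Fact p.Prime] [CharP Fq p]
    (r s : ℕ)
    (hps : Nat.Coprime p s) (hrs : Nat.Coprime r s)
    (g : ℕ) (hg : g = (r - 1) * s) (hg2 : 2 < g)
    (d : ℕ) (hd : 0 < d)
    (x y : RatFunc Fq) (hx : x ≠ 0)
    (heq : y ^ r = (x ^ s + 1) * (x ^ s + (RatFunc.X : RatFunc Fq) ^ (d * s)) / x ^ s)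
    (u v : Polynomial Fq) (huv : IsCoprime u v) (hv : v ≠ 0)
    (hxuv : x = algebraMap (Polynomial Fq) (RatFunc Fq) u /
              algebraMap (Polynomial Fq) (RatFunc Fq) v)
    (δ : ℕ) (hδ : δ = max u.natDegree v.natDegree)
    (hnp : ¬ ∃ z : RatFunc Fq, z ^ p = x) :
    (δ : ℚ) ≤ ((d : ℚ) * g - 1) / ((g : ℚ) - 2) := by
  classical
  obtain ⟨hr, hs⟩ : 1 ≤ r ∧ s ≠ 0 := by
    constructor <;> by_contra h <;> simp_all
  refine cast_le_div_of_mul_add_one_le hg2 ?_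
  have hu : u ≠ 0 := by rintro rfl; simp [hxuv] at hx
  have E := num_pow_mul_eq_denom_pow_mul hu hv hxuv heq
  by_cases hC : u ^ s + v ^ s = 0
  · obtain ⟨hv1, hdeg⟩ := isUnit_and_mul_natDegree_eq_of_pow_add_mul_pow_eq_zero huv hs one_ne_zero
      (by rwa [one_mul])
    simp only [natDegree_one, mul_eq_zero, hs, false_or] at hdeg
    simp only [hδ, hdeg, natDegree_eq_zero_of_isUnit hv1, max_self, mul_zero, zero_add]
    exact Nat.one_le_iff_ne_zero.mpr (by positivity)
  by_cases hD : u ^ s + X ^ (d * s) * v ^ s = 0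
  · obtain ⟨hv1, hdeg⟩ := isUnit_and_mul_natDegree_eq_of_pow_add_mul_pow_eq_zero huv hs
      (pow_ne_zero _ X_ne_zero) hD
    rw [natDegree_X_pow, mul_comm d, Nat.mul_left_cancel_iff (by omega)] at hdeg
    simp only [hδ, hdeg, natDegree_eq_zero_of_isUnit hv1, Nat.max_zero]
    nlinarith
  have ha : y.num ≠ 0 := by
    rintro ha
    simp [ha, zero_pow (by omega : r ≠ 0), hC, hD, y.denom_ne_zero] at E
  rcases mul_max_natDegree_add_one_le_or_derivative_eq_zero hs huv hu hv hC with hM | ⟨hu', hv'⟩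
  · rw [hδ, hg]
    exact sub_one_mul_mul_max_natDegree_add_one_le hr hs hd.ne' hrs huv ha hu hv E hM
  · obtain ⟨z, hz⟩ := RatFunc.exists_pow_eq_of_derivative_pow_eq_zero p hps hu' hv'
    exact absurd ⟨z, hz.trans hxuv.symm⟩ hnp

/-- Height bound (Theorem 3.1, non-`p`-th-power case): let `𝔽_q` have characteristic `p`,
with `p, r, s` pairwise coprime, `g = (r−1)s > 2`, `d` prime to `p`, and let
`(x, y) ∈ 𝔽_q(t)²` satisfy `y^r = (x^s+1)(x^s+t^{ds})/x^s` with `x ≠ 0`.  Write `x = u/v`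
in lowest terms and `δ = max{deg u, deg v}`.  If `x` is not a `p`-th power in `𝔽_q(t)`,
then `δ ≤ (dg − 1)/(g − 2)`. -/
theorem stmt12 (Fq : Type*) [Field Fq] [Fintype Fq]
    (p : ℕ) [Fact p.Prime] [CharP Fq p]
    (r s : ℕ) (hr : 1 ≤ r) (hs : 1 ≤ s)
    (hpr : Nat.Coprime p r) (hps : Nat.Coprime p s) (hrs : Nat.Coprime r s)
    (g : ℕ) (hg : g = (r - 1) * s) (hg2 : 2 < g)
    (d : ℕ) (hd : 0 < d) (hdp : Nat.Coprime d p)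
    (x y : RatFunc Fq) (hx : x ≠ 0)
    (heq : y ^ r = (x ^ s + 1) * (x ^ s + (RatFunc.X : RatFunc Fq) ^ (d * s)) / x ^ s)
    (u v : Polynomial Fq) (huv : IsCoprime u v) (hv : v ≠ 0)
    (hxuv : x = algebraMap (Polynomial Fq) (RatFunc Fq) u /
              algebraMap (Polynomial Fq) (RatFunc Fq) v)
    (δ : ℕ) (hδ : δ = max u.natDegree v.natDegree)
    (hnp : ¬ ∃ z : RatFunc Fq, z ^ p = x) :
    (δ : ℚ) ≤ ((d : ℚ) * g - 1) / ((g : ℚ) - 2) :=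
  stmt12_general Fq p r s hps hrs g hg hg2 d hd x y hx heq u v huv hv hxuv δ hδ hnp
end

section
/- Height bound for p-th powers: with notation as above (g = (r−1)s > 2, d prime to p), if (x, y) is an 𝔽_q(t)-rational point on y^r = (x^s+1)(x^s+t^{ds})/x^s and x = u/v (coprime) is a p-th power, then δ = max{deg u, deg v} ≤ (2d(g−1) − 1)/(g − 2). -/
/-!
Write `x = u / v`. Since `x` is a `p`-th power, `u` and `v` have zero derivative, so
`W = u^s + t^{ds} v^s` has derivative `ds · t^{ds-1} v^s`; as `W` is coprime to `v`, the
non-squarefree part of `W` divides `t^{ds-1}`. A prime `π ≠ t` dividing `W` but not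
`t^{ds} - 1` is coprime to `u v (u^s + v^s)`, so the curve equation
`a^r u^s v^s = b^r (u^s + v^s) W` makes it divide `a`, hence `π^r ∣ W` with `r ≥ 2`, which is
impossible. Therefore `W ∣ t^{ds} (t^{ds} - 1)` and `deg W ≤ 2ds`. Because `p ∤ d` while `p`
divides `deg u` and `deg v`, the two terms of `W` have different degrees, so `δ ≤ 2d`, which
is below the claimed bound.
-/

open Polynomial UniqueFactorizationMonoid

theorem Prime.dvd_of_pow_mul_eq_pow_mul_mul {M : Type*} [CommMonoidWithZero M]
    [IsCancelMulZero M] {a b P Q W π : M} {r : ℕ} (hπ : Prime π) (hab : IsRelPrime a b)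
    (hr : 2 ≤ r) (h : a ^ r * P = b ^ r * (Q * W)) (hW : π ∣ W) (hW2 : ¬ π ^ 2 ∣ W)
    (hP : ¬ π ∣ P) : π ∣ Q := by
  have ha : π ∣ a := by
    have : π ∣ a ^ r * P := h ▸ (hW.mul_left Q).mul_left _
    exact hπ.dvd_of_dvd_pow ((hπ.dvd_or_dvd this).resolve_right hP)
  have hb : ¬ π ∣ b ^ r := fun hb => hπ.not_isUnit (hab ha (hπ.dvd_of_dvd_pow hb))
  have hQW : π ^ 2 ∣ Q * W := by
    refine hπ.pow_dvd_of_dvd_mul_left 2 hb ?_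
    rw [← h]
    exact ((pow_dvd_pow_of_dvd ha 2).trans (pow_dvd_pow a hr)).mul_right P
  by_contra hQ
  exact hW2 (hπ.pow_dvd_of_dvd_mul_left 2 hQ hQW)

theorem UniqueFactorizationMonoid.radical_dvd_of_forall_prime_dvd {M : Type*}
    [CommMonoidWithZero M] [NormalizationMonoid M] [UniqueFactorizationMonoid M] {a b : M}
    (hb : b ≠ 0) (h : ∀ π : M, Prime π → π ∣ a → π ∣ b) : radical a ∣ b := by
  rw [radical_dvd_iff_primeFactors_subset hb]
  intro π hπ
  rw [mem_primeFactors] at hπ ⊢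
  have ha : a ≠ 0 := by rintro rfl; simp at hπ
  obtain ⟨hirr, hnorm, hdvd⟩ := (mem_normalizedFactors_iff' ha).mp hπ
  exact (mem_normalizedFactors_iff' hb).mpr ⟨hirr, hnorm, h π hirr.prime hdvd⟩

theorem IsCoprime.associated_of_mul_eq_mul {R : Type*} [CommRing R] [IsDomain R]
    {a b c d : R} (hab : IsCoprime a b) (hcd : IsCoprime c d) (h : a * d = b * c) :
    Associated a c ∧ Associated b d :=
  ⟨associated_of_dvd_dvd (hab.dvd_of_dvd_mul_left ⟨d, h.symm⟩)
      (hcd.dvd_of_dvd_mul_right ⟨b, by rw [h, mul_comm]⟩),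
    associated_of_dvd_dvd (hab.symm.dvd_of_dvd_mul_left ⟨c, h⟩)
      (hcd.symm.dvd_of_dvd_mul_right ⟨a, by rw [← h, mul_comm]⟩)⟩

theorem natDegree_add_eq_max_of_ne {R : Type*} [Semiring R] {f g : R[X]}
    (h : f.natDegree ≠ g.natDegree) : (f + g).natDegree = max f.natDegree g.natDegree := by
  rcases h.lt_or_gt with hlt | hlt
  · rw [natDegree_add_eq_right_of_natDegree_lt hlt, max_eq_right hlt.le]
  · rw [natDegree_add_eq_left_of_natDegree_lt hlt, max_eq_left hlt.le]

section AddXPowMul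
variable {K : Type*} [Field K] {A B : K[X]} {m : ℕ}

theorem derivative_add_X_pow_mul (hA : derivative A = 0) (hB : derivative B = 0) :
    derivative (A + X ^ m * B) = C (m : K) * X ^ (m - 1) * B := by
  simp [hA, hB, derivative_X_pow]

theorem prime_dvd_X_of_sq_dvd_add_X_pow_mul (hAB : IsCoprime A B) (hA : derivative A = 0)
    (hB : derivative B = 0) (hm : (m : K) ≠ 0) {π : K[X]} (hπ : Prime π)
    (h : π ^ 2 ∣ A + X ^ m * B) : π ∣ X := by
  have hπ' : π ∣ C (m : K) * X ^ (m - 1) * B := by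
    simpa [derivative_add_X_pow_mul hA hB] using pow_sub_one_dvd_derivative_of_pow_dvd h
  rw [mul_assoc, (isUnit_C.mpr (isUnit_iff_ne_zero.mpr hm)).dvd_mul_left] at hπ'
  rcases hπ.dvd_or_dvd hπ' with hX | hB'
  · exact hπ.dvd_of_dvd_pow hX
  · exact absurd ((hAB.add_mul_right_left (X ^ m)).isUnit_of_dvd'
      ((dvd_pow_self π two_ne_zero).trans h) hB') hπ.not_isUnit

theorem divRadical_add_X_pow_mul_dvd_X_pow [DecidableEq K] (hAB : IsCoprime A B)
    (hA : derivative A = 0) (hB : derivative B = 0) (hm : (m : K) ≠ 0) :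
    EuclideanDomain.divRadical (A + X ^ m * B) ∣ X ^ (m - 1) := by
  have hcop : IsCoprime (EuclideanDomain.divRadical (A + X ^ m * B)) B :=
    (hAB.add_mul_right_left (X ^ m)).of_isCoprime_of_dvd_left
      (EuclideanDomain.divRadical_dvd_self _)
  have hd := divRadical_dvd_derivative (A + X ^ m * B)
  rw [derivative_add_X_pow_mul hA hB, mul_assoc,
    (isUnit_C.mpr (isUnit_iff_ne_zero.mpr hm)).dvd_mul_left] at hd
  exact hcop.dvd_of_dvd_mul_right hd

theorem X_pow_sub_one_ne_zero (hm : m ≠ 0) : (X ^ m - 1 : K[X]) ≠ 0 := by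
  simpa using X_pow_sub_C_ne_zero (R := K) (Nat.pos_of_ne_zero hm) 1

theorem natDegree_X_pow_mul_X_pow_sub_one (hm : m ≠ 0) :
    (X ^ m * (X ^ m - 1) : K[X]).natDegree = 2 * m := by
  rw [natDegree_mul (pow_ne_zero _ X_ne_zero) (X_pow_sub_one_ne_zero hm), natDegree_X_pow,
    ← C_1, natDegree_X_pow_sub_C, two_mul]

theorem natDegree_add_X_pow_mul_le {a b : K[X]} {r : ℕ} (hAB : IsCoprime A B)
    (hA : derivative A = 0) (hB : derivative B = 0) (hm : (m : K) ≠ 0)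
    (hab : IsCoprime a b) (hr : 2 ≤ r)
    (h : a ^ r * (A * B) = b ^ r * ((A + B) * (A + X ^ m * B))) :
    (A + X ^ m * B).natDegree ≤ 2 * m := by
  classical
  have hm0 : m ≠ 0 := by rintro rfl; simp at hm
  have hQ : (X ^ m - 1 : K[X]) ≠ 0 := X_pow_sub_one_ne_zero hm0
  have hrad : radical (A + X ^ m * B) ∣ X * (X ^ m - 1) := by
    refine radical_dvd_of_forall_prime_dvd (mul_ne_zero X_ne_zero hQ) fun π hπ hπW => ?_
    by_cases hπX : π ∣ X
    · exact hπX.mul_right _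
    have hπB : ¬ π ∣ B := fun hπB =>
      hπ.not_isUnit ((hAB.add_mul_right_left (X ^ m)).isUnit_of_dvd' hπW hπB)
    have hπA : ¬ π ∣ A := fun hπA => by
      have : π ∣ X ^ m * B := by simpa using dvd_sub hπW hπA
      rcases hπ.dvd_or_dvd this with hX | hB'
      exacts [hπX (hπ.dvd_of_dvd_pow hX), hπB hB']
    have hπAB : π ∣ A + B := hπ.dvd_of_pow_mul_eq_pow_mul_mul hab.isRelPrime hr h hπW
      (fun h2 => hπX (prime_dvd_X_of_sq_dvd_add_X_pow_mul hAB hA hB hm hπ h2))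
      (hπ.not_dvd_mul hπA hπB)
    have : π ∣ (X ^ m - 1) * B := by
      convert dvd_sub hπW hπAB using 1; ring
    exact ((hπ.dvd_or_dvd this).resolve_right hπB).mul_left _
  have hdvd : A + X ^ m * B ∣ X ^ m * (X ^ m - 1) := by
    rw [← EuclideanDomain.radical_mul_divRadical (a := A + X ^ m * B)]
    convert mul_dvd_mul hrad (divRadical_add_X_pow_mul_dvd_X_pow hAB hA hB hm) using 1
    rw [mul_right_comm, ← pow_succ', Nat.sub_one_add_one hm0]
  calc (A + X ^ m * B).natDegree ≤ (X ^ m * (X ^ m - 1) : K[X]).natDegree :=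
        natDegree_le_of_dvd hdvd (mul_ne_zero (pow_ne_zero _ X_ne_zero) hQ)
    _ = 2 * m := natDegree_X_pow_mul_X_pow_sub_one hm0

end AddXPowMul

section CharP
variable {K : Type*} [Field K] (p : ℕ) [CharP K p]

theorem derivative_pow_eq_zero_of_charP (f : K[X]) : derivative (f ^ p) = 0 := by
  simp [derivative_pow]

theorem Associated.derivative_eq_zero_of_pow {f g : K[X]} (h : Associated (g ^ p) f) :
    derivative f = 0 := by
  obtain ⟨w, rfl⟩ := h
  obtain ⟨c, -, hc⟩ := Polynomial.isUnit_iff.mp w.isUnit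
  rw [← hc, derivative_mul, derivative_pow_eq_zero_of_charP, derivative_C]
  simp

theorem dvd_natDegree_of_derivative_eq_zero (hp : p ≠ 0) {f : K[X]} (hf : derivative f = 0) :
    p ∣ f.natDegree := by
  rw [← expand_contract p hf hp, natDegree_expand]
  exact dvd_mul_left _ _

end CharP

theorem RatFunc.derivative_eq_zero_of_div_eq_pow {K : Type*} [Field K] (p : ℕ) [CharP K p]
    {u v : K[X]} (huv : IsCoprime u v) (hv : v ≠ 0) {z : RatFunc K}
    (h : algebraMap K[X] (RatFunc K) u / algebraMap K[X] (RatFunc K) v = z ^ p) :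
    derivative u = 0 ∧ derivative v = 0 := by
  have hcross : u * z.denom ^ p = v * z.num ^ p := by
    apply RatFunc.algebraMap_injective K
    rw [← RatFunc.num_div_denom z, div_pow,
      div_eq_div_iff (by simpa using hv) (pow_ne_zero _ (by simpa using z.denom_ne_zero))] at h
    simpa [mul_comm] using h
  obtain ⟨hu, hv⟩ := huv.associated_of_mul_eq_mul (RatFunc.isCoprime_num_denom z).pow hcross
  exact ⟨hu.symm.derivative_eq_zero_of_pow p, hv.symm.derivative_eq_zero_of_pow p⟩

theorem RatFunc.pow_mul_eq_pow_mul_of_pow_eq_div {K : Type*} [Field K] {r s n : ℕ}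
    {x y : RatFunc K} {u v a b : K[X]} (hu : u ≠ 0) (hv : v ≠ 0) (hb : b ≠ 0)
    (hx : x = algebraMap K[X] (RatFunc K) u / algebraMap K[X] (RatFunc K) v)
    (hy : y = algebraMap K[X] (RatFunc K) a / algebraMap K[X] (RatFunc K) b)
    (h : y ^ r = (x ^ s + 1) * (x ^ s + RatFunc.X ^ n) / x ^ s) :
    a ^ r * (u ^ s * v ^ s) =
      b ^ r * ((u ^ s + v ^ s) * (u ^ s + Polynomial.X ^ n * v ^ s)) := by
  apply RatFunc.algebraMap_injective K
  have hu' : algebraMap K[X] (RatFunc K) u ≠ 0 := by simpa using hu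
  have hv' : algebraMap K[X] (RatFunc K) v ≠ 0 := by simpa using hv
  have hb' : algebraMap K[X] (RatFunc K) b ≠ 0 := by simpa using hb
  subst hx hy
  simp only [map_mul, map_add, map_pow, RatFunc.algebraMap_X]
  rw [div_pow, div_pow] at h
  field_simp at h
  linear_combination h

theorem natDegree_le_of_natDegree_pow_add_X_pow_mul_pow_le {K : Type*} [Field K] {p d s : ℕ}
    {u v : K[X]} (hpd : ¬ p ∣ d) (hs : s ≠ 0) (hv : v ≠ 0) (hpu : p ∣ u.natDegree)
    (hpv : p ∣ v.natDegree) (h : (u ^ s + X ^ (d * s) * v ^ s).natDegree ≤ 2 * (d * s)) :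
    u.natDegree ≤ 2 * d ∧ v.natDegree ≤ d := by
  have hne : (u ^ s).natDegree ≠ (X ^ (d * s) * v ^ s).natDegree := by
    rw [natDegree_pow, natDegree_X_pow_mul _ (pow_ne_zero _ hv), natDegree_pow]
    intro heq
    have : u.natDegree = v.natDegree + d := by
      apply Nat.eq_of_mul_eq_mul_left (Nat.pos_of_ne_zero hs)
      linarith
    exact hpd ((Nat.dvd_add_right hpv).mp (this ▸ hpu))
  rw [natDegree_add_eq_max_of_ne hne, max_le_iff, natDegree_pow,
    natDegree_X_pow_mul _ (pow_ne_zero _ hv), natDegree_pow] at h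
  constructor
  · exact Nat.le_of_mul_le_mul_left (by linarith [h.1]) (Nat.pos_of_ne_zero hs)
  · exact Nat.le_of_mul_le_mul_left (by linarith [h.2]) (Nat.pos_of_ne_zero hs)

theorem stmt13_general (Fq : Type*) [Field Fq]
    (p : ℕ) [Fact p.Prime] [CharP Fq p]
    (r s : ℕ) (hs : 1 ≤ s)
    (hps : Nat.Coprime p s)
    (g : ℕ) (hg : g = (r - 1) * s) (hg2 : 2 < g)
    (d : ℕ) (hd : 0 < d) (hdp : Nat.Coprime d p)
    (x y : RatFunc Fq) (hx : x ≠ 0)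
    (heq : y ^ r = (x ^ s + 1) * (x ^ s + (RatFunc.X : RatFunc Fq) ^ (d * s)) / x ^ s)
    (u v : Polynomial Fq) (huv : IsCoprime u v) (hv : v ≠ 0)
    (hxuv : x = algebraMap (Polynomial Fq) (RatFunc Fq) u /
              algebraMap (Polynomial Fq) (RatFunc Fq) v)
    (δ : ℕ) (hδ : δ = max u.natDegree v.natDegree)
    (hp : ∃ z : RatFunc Fq, z ^ p = x) :
    (δ : ℚ) ≤ (2 * (d : ℚ) * ((g : ℚ) - 1) - 1) / ((g : ℚ) - 2) := by
  have hprime : p.Prime := Fact.out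
  have hr : 2 ≤ r := by
    by_contra
    simp [show r - 1 = 0 by omega] at hg
    omega
  have hpd : ¬ p ∣ d := (Nat.Prime.coprime_iff_not_dvd hprime).mp hdp.symm
  have hps' : ¬ p ∣ s := (Nat.Prime.coprime_iff_not_dvd hprime).mp hps
  have hm : ((d * s : ℕ) : Fq) ≠ 0 := by
    rw [Ne, CharP.cast_eq_zero_iff Fq p]
    exact hprime.prime.not_dvd_mul hpd hps'
  have hu : u ≠ 0 := by rintro rfl; simp [hxuv] at hx
  obtain ⟨z, hz⟩ := hp
  obtain ⟨hu', hv'⟩ := RatFunc.derivative_eq_zero_of_div_eq_pow p huv hv (hxuv ▸ hz.symm)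
  have hdeg := natDegree_add_X_pow_mul_le huv.pow (by simp [derivative_pow, hu'])
    (by simp [derivative_pow, hv']) hm (RatFunc.isCoprime_num_denom y) hr
    (RatFunc.pow_mul_eq_pow_mul_of_pow_eq_div hu hv y.denom_ne_zero hxuv
      (RatFunc.num_div_denom y).symm heq)
  obtain ⟨hdu, hdv⟩ := natDegree_le_of_natDegree_pow_add_X_pow_mul_pow_le hpd (by omega) hv
    (dvd_natDegree_of_derivative_eq_zero p hprime.ne_zero hu')
    (dvd_natDegree_of_derivative_eq_zero p hprime.ne_zero hv') hdeg
  have hδd : (δ : ℚ) ≤ 2 * d := by exact_mod_cast hδ ▸ max_le hdu (by omega)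
  have hg3 : (3 : ℚ) ≤ g := by exact_mod_cast hg2
  have hd1 : (1 : ℚ) ≤ d := by exact_mod_cast hd
  rw [le_div_iff₀ (by linarith)]
  nlinarith

/-- Height bound (Theorem 3.1, `p`-th-power case): with notation as in the non-`p`-th-power
case (`g = (r−1)s > 2`, `d` prime to `p`), if `(x, y)` is an `𝔽_q(t)`-rational point on
`y^r = (x^s+1)(x^s+t^{ds})/x^s` with `x = u/v` in lowest terms a `p`-th power, then
`δ = max{deg u, deg v} ≤ (2d(g−1) − 1)/(g − 2)`. -/
theorem stmt13 (Fq : Type*) [Field Fq] [Fintype Fq]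
    (p : ℕ) [Fact p.Prime] [CharP Fq p]
    (r s : ℕ) (hr : 1 ≤ r) (hs : 1 ≤ s)
    (hpr : Nat.Coprime p r) (hps : Nat.Coprime p s) (hrs : Nat.Coprime r s)
    (g : ℕ) (hg : g = (r - 1) * s) (hg2 : 2 < g)
    (d : ℕ) (hd : 0 < d) (hdp : Nat.Coprime d p)
    (x y : RatFunc Fq) (hx : x ≠ 0)
    (heq : y ^ r = (x ^ s + 1) * (x ^ s + (RatFunc.X : RatFunc Fq) ^ (d * s)) / x ^ s)
    (u v : Polynomial Fq) (huv : IsCoprime u v) (hv : v ≠ 0)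
    (hxuv : x = algebraMap (Polynomial Fq) (RatFunc Fq) u /
              algebraMap (Polynomial Fq) (RatFunc Fq) v)
    (δ : ℕ) (hδ : δ = max u.natDegree v.natDegree)
    (hp : ∃ z : RatFunc Fq, z ^ p = x) :
    (δ : ℚ) ≤ (2 * (d : ℚ) * ((g : ℚ) - 1) - 1) / ((g : ℚ) - 2) :=
  stmt13_general Fq p r s hs hps g hg hg2 d hd hdp x y hx heq u v huv hv hxuv δ hδ hp
end

section
/- Let d = q^n + 1 and let d' = q^m + 1 divide d (m | n, n/m odd), e = d/d'. Then (x, y) = (t^e, h(t^e)^{d'/r}) satisfies y^r = h(x)·h(t^d/x) over 𝔽_q(t), for any h ∈ 𝔽_q[x] and any r dividing d'. -/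
open Polynomial

lemma expand_pow_card {Fq : Type*} [Field Fq] [Fintype Fq] (q : ℕ)
    (hq : Fintype.card Fq = q) (m : ℕ) (p : Polynomial Fq) :
    expand Fq (q ^ m) p = p ^ (q ^ m) := by
  subst hq
  induction m with
  | zero => simp
  | succ k ih =>
    rw [pow_succ, expand_mul, FiniteField.expand_card, map_pow, ih, ← pow_mul]

/-- Let `q = #𝔽_q`, `d = q^n + 1`, `d' = q^m + 1` with `m ∣ n` and `n/m` odd (so `d' ∣ d`),
and `e = d/d'`.  Then for any `h ∈ 𝔽_q[x]` and any `r ∣ d'`, the point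
`(x, y) = (t^e, h(t^e)^{d'/r})` satisfies `y^r = h(x)·h(t^d/x)` over `𝔽_q(t)`; i.e., as
polynomials in `t`, `(h(t^e)^{d'/r})^r = h(t^e) · h(t^{d−e})`. -/
theorem stmt16 (Fq : Type*) [Field Fq] [Fintype Fq]
    (q : ℕ) (hq : Fintype.card Fq = q)
    (m n : ℕ) (hm : 0 < m) (hmn : m ∣ n) (hodd : Odd (n / m))
    (d d' e : ℕ) (hd : d = q ^ n + 1) (hd' : d' = q ^ m + 1)
    (hdd : d' ∣ d) (he : e = d / d')
    (r : ℕ) (hr : 0 < r) (hrd : r ∣ d')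
    (h : Polynomial Fq) :
    ((h.comp (X ^ e)) ^ (d' / r)) ^ r = h.comp (X ^ e) * h.comp (X ^ (d - e)) := by
  have hed' : e * d' = d := by rw [he]; exact Nat.div_mul_cancel hdd
  have heq : e * q ^ m = d - e := by
    have : e * q ^ m + e = d := by rw [← hed', hd']; ring
    omega
  have key : h.comp (X ^ e) ^ q ^ m = h.comp (X ^ (d - e)) := by
    rw [← expand_pow_card q hq m, expand_eq_comp_X_pow, comp_assoc, X_pow_comp, ← pow_mul,
      mul_comm, heq]
  rw [← pow_mul, Nat.div_mul_cancel hrd, hd', pow_succ, key, mul_comm]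
end
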